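/- Fix r > 0 and the setup of Φ[a,b,c,d]. Any four vectors y_{α₁}, y_{α₂}, y_{α₃}, y_{α₄} ∈ ℂ⁴ with |α_j| = r and the α_j pairwise distinct are linearly independent. -/

import Mathlib

/-!
On the circle `‖α‖ = r` we have `conj α = r² / α`, so `y_α = M *ᵥ (conj α, 1, α, α²)` for a matrix
`M` that does not depend on `α`. The matrix with rows `(conj αⱼ, 1, αⱼ, αⱼ²)` becomes, after
multiplying row `j` by `αⱼ`, the Vandermonde matrix of the `αⱼ` with its first column scaled by
`r²`; it is invertible because the `αⱼ` are distinct. Finally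
`det M = -c g (e + f r²) (h + k r² - c d)`, and every factor is positive because
`h + k r² - c d = (c (c + d) + d (a b c + d) r²) / (a b - 1)`.
-/

open Function

namespace Matrix

variable {R : Type*} [CommRing R] {n : ℕ}

/-- With `y = ρ / x` this is the Vandermonde matrix of `x` with exponents `-1, 0, …, n - 1`. -/
def consVandermonde (y x : Fin (n + 1) → R) : Matrix (Fin (n + 1)) (Fin (n + 1)) R :=
  of fun j => vecCons (y j) fun i : Fin n => x j ^ (i : ℕ)

theorem diagonal_mul_consVandermonde {x y : Fin (n + 1) → R} {ρ : R} (hxy : ∀ j, x j * y j = ρ) :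
    diagonal x * consVandermonde y x = vandermonde x * diagonal (Fin.cons ρ 1) := by
  ext j l
  refine Fin.cases ?_ (fun i => ?_) l <;> simp [consVandermonde, hxy, pow_succ']

theorem prod_mul_det_consVandermonde {x y : Fin (n + 1) → R} {ρ : R} (hxy : ∀ j, x j * y j = ρ) :
    (∏ j, x j) * (consVandermonde y x).det = ρ * (vandermonde x).det := by
  have h := congrArg det (diagonal_mul_consVandermonde hxy)
  rw [det_mul, det_mul, det_diagonal, det_diagonal, Fin.prod_cons] at h
  simpa [mul_comm ρ] using h

theorem det_consVandermonde_ne_zero [IsDomain R] {x y : Fin (n + 1) → R} {ρ : R} (hρ : ρ ≠ 0)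
    (hx : Injective x) (hxy : ∀ j, x j * y j = ρ) : (consVandermonde y x).det ≠ 0 := by
  intro h0
  have h := prod_mul_det_consVandermonde hxy
  rw [h0, mul_zero] at h
  exact mul_ne_zero hρ (det_vandermonde_ne_zero_iff.mpr hx) h.symm

end Matrix

open Matrix

variable {R : Type*} [CommRing R]

/-- The coefficients of `y_α` in the basis `conj α, 1, α, α²`, where `ρ = ‖α‖²`. -/
def phiCoeffMatrix (c d e f g h k ρ : R) : Matrix (Fin 4) (Fin 4) R :=
  !![0, 0, g, -g;
     0, -(c * d * ρ), h + k * ρ, -(c * d);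
     0, -(e + f * ρ), 0, 0;
     -c, -(d * ρ), 0, 0]

theorem det_phiCoeffMatrix (c d e f g h k ρ : R) :
    (phiCoeffMatrix c d e f g h k ρ).det = -(c * g * (e + f * ρ) * (h + k * ρ - c * d)) := by
  simp [phiCoeffMatrix, det_succ_row_zero, Fin.sum_univ_succ, Fin.succAbove]
  ring

noncomputable def yVec (c d e f g h k : ℝ) (α : ℂ) : Fin 4 → ℂ :=
  ![(g : ℂ) * α * (1 - α),
    α * ((h : ℂ) - (c : ℂ) * (d : ℂ) * (α + starRingEnd ℂ α) + (k : ℂ) * (‖α‖ : ℂ) ^ 2),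
    -((e : ℂ) + (f : ℂ) * (‖α‖ : ℂ) ^ 2),
    -(starRingEnd ℂ α) * ((c : ℂ) + (d : ℂ) * α)]

theorem yVec_eq_mulVec (c d e f g h k : ℝ) (α : ℂ) :
    yVec c d e f g h k α = phiCoeffMatrix (c : ℂ) d e f g h k ((‖α‖ : ℂ) ^ 2) *ᵥ
      vecCons (starRingEnd ℂ α) fun i : Fin 3 => α ^ (i : ℕ) := by
  have hα := Complex.mul_conj' α
  ext i
  fin_cases i <;> simp [yVec, phiCoeffMatrix, mulVec, dotProduct, Fin.sum_univ_four]
  · ring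
  · linear_combination (-(c * d : ℂ)) * hα
  · linear_combination (-(d : ℂ)) * hα

section Parameters

variable {a b c d e f h k ρ : ℝ}

theorem phi_e_add_f_mul_pos (ha : 0 < a) (hc : 0 < c) (hd : 0 < d) (hab : 1 < a * b)
    (he : e = a * (c + d) * c / (a * b - 1)) (hf : f = a * (c + d) * d / (a * b - 1))
    (hρ : 0 ≤ ρ) : 0 < e + f * ρ := by
  have hab' : 0 < a * b - 1 := sub_pos.mpr hab
  subst he hf
  positivity

theorem phi_h_add_k_mul_sub_pos (hc : 0 < c) (hd : 0 < d) (hab : 1 < a * b)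
    (he : e = a * (c + d) * c / (a * b - 1)) (hf : f = a * (c + d) * d / (a * b - 1))
    (hh : h = b * e - c ^ 2) (hk : k = b * f - d ^ 2) (hρ : 0 ≤ ρ) :
    0 < h + k * ρ - c * d := by
  have hab' : 0 < a * b - 1 := sub_pos.mpr hab
  have he' : e * (a * b - 1) = a * (c + d) * c := by rw [he, div_mul_cancel₀ _ hab'.ne']
  have hf' : f * (a * b - 1) = a * (c + d) * d := by rw [hf, div_mul_cancel₀ _ hab'.ne']
  have hquotient : h + k * ρ - c * d = (c * (c + d) + d * ρ * (a * b * c + d)) / (a * b - 1) := by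
    rw [eq_div_iff hab'.ne', hh, hk]
    linear_combination b * he' + b * ρ * hf'
  rw [hquotient]
  positivity

end Parameters

theorem y_alpha_four_linearIndependent_general (a b c d e f g h k : ℝ)
    (ha : 0 < a) (hc : 0 < c) (hd : 0 < d) (hab : 1 < a * b)
    (hg : g = Real.sqrt (a * c * d))
    (he : e = a * (c + d) * c / (a * b - 1))
    (hf : f = a * (c + d) * d / (a * b - 1))
    (hh : h = b * e - c ^ 2) (hk : k = b * f - d ^ 2)
    (r : ℝ) (hr : 0 < r) (α : Fin 4 → ℂ)
    (habs : ∀ j, ‖α j‖ = r) (hinj : Function.Injective α) :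
    LinearIndependent ℂ (fun j : Fin 4 =>
      (![(g : ℂ) * α j * (1 - α j),
         α j * ((h : ℂ) - (c : ℂ) * (d : ℂ) * (α j + starRingEnd ℂ (α j)) +
           (k : ℂ) * (‖α j‖ : ℂ) ^ 2),
         -((e : ℂ) + (f : ℂ) * (‖α j‖ : ℂ) ^ 2),
         -(starRingEnd ℂ (α j)) * ((c : ℂ) + (d : ℂ) * α j)] : Fin 4 → ℂ)) := by
  set M := phiCoeffMatrix (c : ℂ) d e f g h k ((r : ℂ) ^ 2)
  set V := consVandermonde (starRingEnd ℂ ∘ α) α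
  have hrows (j : Fin 4) : yVec c d e f g h k (α j) = M *ᵥ V j := by
    rw [yVec_eq_mulVec, habs j]
    rfl
  have hV : V.det ≠ 0 := by
    have hr2 : (r : ℂ) ^ 2 ≠ 0 := pow_ne_zero 2 (Complex.ofReal_ne_zero.mpr hr.ne')
    refine det_consVandermonde_ne_zero hr2 hinj fun j => ?_
    rw [Function.comp_apply, Complex.mul_conj', habs j]
  have hM : M.det ≠ 0 := by
    have hef := phi_e_add_f_mul_pos ha hc hd hab he hf (sq_nonneg r)
    have hhk := phi_h_add_k_mul_sub_pos hc hd hab he hf hh hk (sq_nonneg r)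
    have hg' : 0 < g := hg ▸ Real.sqrt_pos.mpr (by positivity)
    have hdet : 0 < c * g * (e + f * r ^ 2) * (h + k * r ^ 2 - c * d) := by positivity
    rw [det_phiCoeffMatrix]
    exact_mod_cast neg_ne_zero.mpr hdet.ne'
  have hVrows : LinearIndependent ℂ V.row :=
    linearIndependent_rows_iff_isUnit.mpr ((isUnit_iff_isUnit_det V).mpr hV.isUnit)
  have hMinj : Injective M.mulVecLin :=
    mulVec_injective_iff_isUnit.mpr ((isUnit_iff_isUnit_det M).mpr hM.isUnit)
  change LinearIndependent ℂ fun j => yVec c d e f g h k (α j)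
  simp_rw [hrows]
  exact hVrows.map' M.mulVecLin (LinearMap.ker_eq_bot.mpr hMinj)

/-- Any four vectors `y_{α_j}` with `|α_j| = r` and the `α_j` pairwise distinct
are linearly independent in `ℂ⁴`. -/
theorem y_alpha_four_linearIndependent (a b c d e f g h k : ℝ)
    (ha : 0 < a) (hb : 0 < b) (hc : 0 < c) (hd : 0 < d) (hab : 1 < a * b)
    (hg : g = Real.sqrt (a * c * d))
    (he : e = a * (c + d) * c / (a * b - 1))
    (hf : f = a * (c + d) * d / (a * b - 1))
    (hh : h = b * e - c ^ 2) (hk : k = b * f - d ^ 2)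
    (r : ℝ) (hr : 0 < r) (α : Fin 4 → ℂ)
    (habs : ∀ j, ‖α j‖ = r) (hinj : Function.Injective α) :
    LinearIndependent ℂ (fun j : Fin 4 =>
      (![(g : ℂ) * α j * (1 - α j),
         α j * ((h : ℂ) - (c : ℂ) * (d : ℂ) * (α j + starRingEnd ℂ (α j)) +
           (k : ℂ) * (‖α j‖ : ℂ) ^ 2),
         -((e : ℂ) + (f : ℂ) * (‖α j‖ : ℂ) ^ 2),
         -(starRingEnd ℂ (α j)) * ((c : ℂ) + (d : ℂ) * α j)] : Fin 4 → ℂ)) :=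
  y_alpha_four_linearIndependent_general a b c d e f g h k ha hc hd hab hg he hf hh hk r hr α habs
    hinj
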